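/- For every integer n ≥ 9, the complete symmetric sum Σ over 1 ≤ i₁ ≤ ... ≤ i₇ ≤ n-1 of Π_{ν=1}^{7} cos(2πi_ν/n) equals -n(n+4)(n+5)/384. -/

import Mathlib

/-!
Newton's identities `r h_r = ∑_{j=1}^{r} p_j h_{r-j}` reduce `h₇` to the power sums
`p_j = ∑_k cos^j (2πk/n)`. Writing `2 cos (2πk/n) = ζ^k + ζ^{-k}` for a primitive `n`-th root
of unity `ζ` and expanding binomially, only the terms `ζ^{k(2i-j)}` with `n ∣ 2i - j` survive
the sum over `k mod n`; for `j < n` this forces `2i = j`, so the full sum of `(2 cos)^j` is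
`n·C(j, j/2)` for even `j` and `0` for odd `j`. Removing `k = 0` gives `p_j`, and the recursion
for `r ≤ 7` only ever uses these closed forms.
-/

open Real Finset

/-- The complete homogeneous symmetric sum of degree `r` in the variables
`f k`, `k ∈ s`: the sum over all multisets of size `r` from `s` of the product
of the corresponding values (i.e. over `1 ≤ i₁ ≤ ⋯ ≤ i_r`, all in `s`). -/
noncomputable def completeSym (s : Finset ℕ) (r : ℕ) (f : ℕ → ℝ) : ℝ :=
  ∑ m ∈ s.sym r, (Multiset.map f (Sym.toMultiset m)).prod

namespace IsPrimitiveRoot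

variable {K : Type*} [Field K] {ζ : K} {n : ℕ}

theorem geom_sum_zpow_eq_ite (hζ : IsPrimitiveRoot ζ n) (m : ℤ) :
    ∑ k ∈ range n, (ζ ^ m) ^ k = if (n : ℤ) ∣ m then (n : K) else 0 := by
  split_ifs with hm
  · simp [(hζ.zpow_eq_one_iff_dvd m).mpr hm]
  · have hne : ζ ^ m ≠ 1 := mt (hζ.zpow_eq_one_iff_dvd m).mp hm
    rw [geom_sum_eq hne, ← zpow_natCast, ← zpow_mul, mul_comm, zpow_mul, zpow_natCast,
      hζ.pow_eq_one, one_zpow, sub_self, zero_div]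

theorem sum_range_add_inv_pow (hζ : IsPrimitiveRoot ζ n) {j : ℕ} (hjn : j < n) :
    ∑ k ∈ range n, (ζ ^ k + (ζ ^ k)⁻¹) ^ j =
      if Even j then (n * j.choose (j / 2) : K) else 0 := by
  have hζ0 : ζ ≠ 0 := hζ.ne_zero (by omega)
  have hterm (k i : ℕ) (hi : i ≤ j) :
      (ζ ^ k) ^ i * (ζ ^ k)⁻¹ ^ (j - i) = (ζ ^ (2 * (i : ℤ) - j)) ^ k := by
    rw [← pow_mul, inv_pow, ← pow_mul, ← div_eq_mul_inv, ← zpow_natCast (ζ ^ _) k, ← zpow_mul,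
      ← zpow_natCast ζ (k * i), ← zpow_natCast ζ (k * (j - i)), ← zpow_sub₀ hζ0]
    congr 1
    push_cast [hi]
    ring
  have hdvd (i : ℕ) (hi : i ≤ j) : (n : ℤ) ∣ 2 * (i : ℤ) - j ↔ 2 * i = j :=
    ⟨fun h => by have := Int.eq_zero_of_dvd_of_natAbs_lt_natAbs h (by omega); omega,
      fun h => ⟨0, by omega⟩⟩
  calc ∑ k ∈ range n, (ζ ^ k + (ζ ^ k)⁻¹) ^ j
      = ∑ i ∈ range (j + 1), (j.choose i : K) * ∑ k ∈ range n, (ζ ^ (2 * (i : ℤ) - j)) ^ k := by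
        simp_rw [add_pow, mul_sum]
        rw [sum_comm]
        refine sum_congr rfl fun i hi => sum_congr rfl fun k _ => ?_
        rw [hterm k i (by simpa [Nat.lt_succ_iff] using hi), mul_comm]
    _ = ∑ i ∈ range (j + 1), if 2 * i = j then (n * j.choose i : K) else 0 := by
        refine sum_congr rfl fun i hi => ?_
        rw [hζ.geom_sum_zpow_eq_ite,
          if_congr (hdvd i (by simpa [Nat.lt_succ_iff] using hi)) rfl rfl]
        split_ifs <;> ring
    _ = _ := by
        rcases Nat.even_or_odd j with ⟨m, rfl⟩ | ⟨m, rfl⟩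
        · rw [if_pos ⟨m, rfl⟩]
          simp_rw [show ∀ i, 2 * i = m + m ↔ i = m by omega]
          rw [sum_ite_eq', if_pos (by simp), show (m + m) / 2 = m by omega]
        · rw [if_neg (by simp)]
          exact sum_eq_zero fun i _ => if_neg (by omega)

end IsPrimitiveRoot

theorem sum_range_two_mul_cos_pow {n j : ℕ} (hjn : j < n) :
    ∑ k ∈ range n, (2 * cos (2 * π * k / n)) ^ j =
      if Even j then (n * j.choose (j / 2) : ℝ) else 0 := by
  have hcos (k : ℕ) : Complex.exp (2 * π * Complex.I / n) ^ k
      + (Complex.exp (2 * π * Complex.I / n) ^ k)⁻¹ = ((2 * cos (2 * π * k / n) : ℝ) : ℂ) := by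
    rw [← Complex.exp_nat_mul, ← Complex.exp_neg]
    push_cast
    rw [Complex.two_cos]
    ring_nf
  have hsum := (Complex.isPrimitiveRoot_exp n (by omega)).sum_range_add_inv_pow hjn
  simp_rw [hcos] at hsum
  apply Complex.ofReal_injective
  simp only [Complex.ofReal_sum, Complex.ofReal_pow, hsum]
  split_ifs <;> simp

theorem sum_Icc_cos_pow {n j : ℕ} (hjn : j < n) :
    ∑ k ∈ Icc 1 (n - 1), cos (2 * π * k / n) ^ j =
      (if Even j then (n * j.choose (j / 2) : ℝ) else 0) / 2 ^ j - 1 := by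
  have hrange : range n = insert 0 (Icc 1 (n - 1)) := by
    ext k; simp only [mem_range, mem_insert, mem_Icc]; omega
  have hsum := sum_range_two_mul_cos_pow hjn
  rw [hrange, sum_insert (by simp)] at hsum
  simp only [mul_pow, ← mul_sum, CharP.cast_eq_zero, mul_zero, zero_div, cos_zero,
    mul_one] at hsum
  rw [← hsum]
  field_simp
  ring

theorem completeSym_zero (s : Finset ℕ) (f : ℕ → ℝ) : completeSym s 0 f = 1 := by
  simp [completeSym, sym_zero, Sym.eq_nil_of_card_zero, Sym.coe_nil]

/-- `x_a ∂h_r/∂x_a`, written as a sum over monomials. -/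
noncomputable def completeSymCountWeighted (s : Finset ℕ) (r : ℕ) (f : ℕ → ℝ) (a : ℕ) : ℝ :=
  ∑ m ∈ s.sym r,
    (Multiset.count a (Sym.toMultiset m) : ℝ) * (Multiset.map f (Sym.toMultiset m)).prod

theorem completeSymCountWeighted_succ {s : Finset ℕ} {a : ℕ} (ha : a ∈ s) (r : ℕ) (f : ℕ → ℝ) :
    completeSymCountWeighted s (r + 1) f a =
      f a * (completeSym s r f + completeSymCountWeighted s r f a) := by
  unfold completeSymCountWeighted completeSym
  calc ∑ m ∈ s.sym (r + 1),
        (Multiset.count a (Sym.toMultiset m) : ℝ) * (Multiset.map f (Sym.toMultiset m)).prod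
      = ∑ m ∈ (s.sym (r + 1)).filter (a ∈ ·),
          (Multiset.count a (Sym.toMultiset m) : ℝ) * (Multiset.map f (Sym.toMultiset m)).prod := by
        refine (sum_filter_of_ne fun m _ hne => ?_).symm
        by_contra ham
        exact hne (by simp [Multiset.count_eq_zero.mpr (mt Sym.mem_coe.1 ham)])
    _ = ∑ m ∈ s.sym r, ((Multiset.count a (Sym.toMultiset m) : ℝ) + 1) *
          (f a * (Multiset.map f (Sym.toMultiset m)).prod) := by
        -- the monomials containing `x_a` are exactly `x_a` times the monomials of degree `r`
        refine sum_bij' (fun m hm => m.erase a (mem_filter.1 hm).2) (fun m _ => a ::ₛ m)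
          ?_ ?_ ?_ ?_ ?_
        · intro m hm
          simp only [mem_filter, mem_sym_iff] at hm ⊢
          exact fun b hb => hm.1 b (Multiset.mem_of_mem_erase hb)
        · intro m hm
          refine mem_filter.2 ⟨mem_sym_iff.2 fun b hb => ?_, Sym.mem_cons_self a m⟩
          rcases Sym.mem_cons.1 hb with rfl | hb
          exacts [ha, mem_sym_iff.1 hm b hb]
        · intro m _; exact Sym.cons_erase _
        · intro m _; exact Sym.erase_cons_head m a
        · intro m hm
          conv_lhs => rw [← Sym.cons_erase (mem_filter.1 hm).2]
          rw [Sym.coe_cons, Multiset.count_cons_self, Multiset.map_cons, Multiset.prod_cons]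
          push_cast
          ring
    _ = _ := by
        rw [mul_add, mul_sum, mul_sum, ← sum_add_distrib]
        exact sum_congr rfl fun m _ => by ring

theorem completeSymCountWeighted_eq {s : Finset ℕ} {a : ℕ} (ha : a ∈ s) (r : ℕ) (f : ℕ → ℝ) :
    completeSymCountWeighted s r f a =
      ∑ j ∈ range r, f a ^ (j + 1) * completeSym s (r - (j + 1)) f := by
  induction r with
  | zero => simp [completeSymCountWeighted, sym_zero, Sym.eq_nil_of_card_zero, Sym.coe_nil]
  | succ r ih =>
    rw [completeSymCountWeighted_succ ha, ih, sum_range_succ', mul_add, mul_sum, add_comm]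
    simp only [Nat.add_sub_add_right, zero_add, pow_one]
    congr 1
    exact sum_congr rfl fun j _ => by ring

theorem mul_completeSym_eq_sum_countWeighted (s : Finset ℕ) (r : ℕ) (f : ℕ → ℝ) :
    (r : ℝ) * completeSym s r f = ∑ a ∈ s, completeSymCountWeighted s r f a := by
  simp only [completeSymCountWeighted, completeSym]
  rw [sum_comm, mul_sum]
  refine sum_congr rfl fun m hm => ?_
  rw [← sum_mul, ← Nat.cast_sum,
    Multiset.sum_count_eq_card (m := Sym.toMultiset m) (mem_sym_iff.1 hm)]
  simp

theorem mul_completeSym_eq_sum (s : Finset ℕ) (r : ℕ) (f : ℕ → ℝ) :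
    (r : ℝ) * completeSym s r f =
      ∑ j ∈ range r, (∑ a ∈ s, f a ^ (j + 1)) * completeSym s (r - (j + 1)) f := by
  rw [mul_completeSym_eq_sum_countWeighted,
    sum_congr rfl fun a ha => completeSymCountWeighted_eq ha r f, sum_comm]
  simp_rw [sum_mul]

theorem mul_completeSym_cos_eq_sum {n r : ℕ} (hr : r < n) :
    (r : ℝ) * completeSym (Icc 1 (n - 1)) r (fun k => cos (2 * π * k / n)) =
      ∑ j ∈ range r,
        ((if Even (j + 1) then (n * (j + 1).choose ((j + 1) / 2) : ℝ) else 0) / 2 ^ (j + 1) - 1) *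
          completeSym (Icc 1 (n - 1)) (r - (j + 1)) (fun k => cos (2 * π * k / n)) := by
  rw [mul_completeSym_eq_sum]
  refine sum_congr rfl fun j hj => ?_
  rw [sum_Icc_cos_pow (by rw [mem_range] at hj; omega)]

theorem h7_at_cosine_points (n : ℕ) (hn : 9 ≤ n) :
    completeSym (Finset.Icc 1 (n - 1)) 7 (fun k => Real.cos (2 * π * k / n))
    = -(n * (n + 4) * (n + 5)) / 384 := by
  have newton (r : ℕ) (hr : r < n) := mul_completeSym_cos_eq_sum hr
  set s := Icc 1 (n - 1)
  set f : ℕ → ℝ := fun k => cos (2 * π * k / n)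
  have h0 : completeSym s 0 f = 1 := completeSym_zero s f
  have h1 : completeSym s 1 f = -1 := by
    have := newton 1 (by omega)
    norm_num [sum_range_succ, Nat.choose, h0] at this; linarith
  have h2 : completeSym s 2 f = n / 4 := by
    have := newton 2 (by omega)
    norm_num [sum_range_succ, Nat.choose, h0, h1] at this; linarith
  have h3 : completeSym s 3 f = -(n / 4) := by
    have := newton 3 (by omega)
    norm_num [sum_range_succ, Nat.choose, h0, h1, h2] at this; linarith
  have h4 : completeSym s 4 f = n * (n + 3) / 32 := by
    have := newton 4 (by omega)
    norm_num [sum_range_succ, Nat.choose, h0, h1, h2, h3] at this; linarith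
  have h5 : completeSym s 5 f = -(n * (n + 3) / 32) := by
    have := newton 5 (by omega)
    norm_num [sum_range_succ, Nat.choose, h0, h1, h2, h3, h4] at this; linarith
  have h6 : completeSym s 6 f = n * (n + 4) * (n + 5) / 384 := by
    have := newton 6 (by omega)
    norm_num [sum_range_succ, Nat.choose, h0, h1, h2, h3, h4, h5] at this; linarith
  have := newton 7 (by omega)
  norm_num [sum_range_succ, Nat.choose, h0, h1, h2, h3, h4, h5, h6] at this; linarith
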